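/- Let 𝒲 ∈ 𝒮^{r×n} and let S ⊆ ℝⁿ be a linear subspace. Then: (a) the set of 𝒲-monomial maps m(𝒲) is Q(𝒲)-affine; (b) Δ_S m(𝒲) = Q(𝒲)(S \ {0}). -/

import Mathlib

/-!
Writing `x^B = exp (B log x)`, a difference of monomial maps factors through two divided
differences of strictly increasing functions, both positive: of `log` in each coordinate and of
`exp` in each row. Hence `κ ∗ x^B - κ ∗ y^B = (diag (κ e) · B · diag ℓ) (x - y)` with `e, ℓ > 0`,
and positive row and column scalings preserve the sign pattern. Conversely, given `M ∈ Q(𝒲)` and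
positive `x, y`, the choice `B = M · diag ℓ⁻¹`, `κ = e⁻¹` makes this identity read
`G x - G y = M (x - y)`; every `z` is a difference `x - y` of positive vectors.
-/

/-- The positive orthant `ℝⁿ_{>0}`. -/
def posOrth (n : ℕ) : Set (Fin n → ℝ) := {x | ∀ i, 0 < x i}

/-- The generalized monomial map `μ_B : x ↦ x^B`, `(x^B)_j = ∏ᵢ xᵢ^{B j i}`. -/
noncomputable def monMap {n r : ℕ} (B : Matrix (Fin r) (Fin n) ℝ) (x : Fin n → ℝ) :
    Fin r → ℝ :=
  fun j => ∏ i, x i ^ B j i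

/-- `m(B) = {x ↦ κ ∗ x^B : κ ∈ ℝʳ_{>0}}`. -/
noncomputable def mSet {n r : ℕ} (B : Matrix (Fin r) (Fin n) ℝ) :
    Set ((Fin n → ℝ) → (Fin r → ℝ)) :=
  {G | ∃ κ : Fin r → ℝ, (∀ j, 0 < κ j) ∧ G = fun x => fun j => κ j * monMap B x j}

/-- The qualitative class `Q(𝒲)` of a matrix `𝒲` of sets of signs. -/
noncomputable def QualS {n r : ℕ} (𝒲 : Matrix (Fin r) (Fin n) (Set SignType)) :
    Set (Matrix (Fin r) (Fin n) ℝ) :=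
  {B | ∀ i j, SignType.sign (B i j) ∈ 𝒲 i j}

/-- The set of `𝒲`-monomial maps `m(𝒲) = ⋃_{B ∈ Q(𝒲)} m(B)`. -/
noncomputable def mW {n r : ℕ} (𝒲 : Matrix (Fin r) (Fin n) (Set SignType)) :
    Set ((Fin n → ℝ) → (Fin r → ℝ)) :=
  {G | ∃ B ∈ QualS 𝒲, G ∈ mSet B}

/-- `G : X → ℝʳ` is `ℬ`-affine on `X`. -/
def IsAffine {n r : ℕ} (X : Set (Fin n → ℝ)) (ℬ : Set (Matrix (Fin r) (Fin n) ℝ))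
    (G : (Fin n → ℝ) → (Fin r → ℝ)) : Prop :=
  ∀ x ∈ X, ∀ y ∈ X, ∃ M ∈ ℬ, G x - G y = M.mulVec (x - y)

/-- `Δ_S 𝒢` for maps on the positive orthant. -/
def DeltaS {n r : ℕ} (X : Set (Fin n → ℝ)) (S : Submodule ℝ (Fin n → ℝ))
    (𝒢 : Set ((Fin n → ℝ) → (Fin r → ℝ))) : Set (Fin r → ℝ) :=
  {w | ∃ G ∈ 𝒢, ∃ x ∈ X, ∃ y ∈ X, x - y ∈ S ∧ x - y ≠ 0 ∧ w = G x - G y}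

/-- `ℬ(T) = {M z : M ∈ ℬ, z ∈ T}`. -/
def matImage {n r : ℕ} (ℬ : Set (Matrix (Fin r) (Fin n) ℝ)) (T : Set (Fin n → ℝ)) :
    Set (Fin r → ℝ) :=
  {w | ∃ M ∈ ℬ, ∃ z ∈ T, w = M.mulVec z}

open Matrix

lemma StrictMonoOn.exists_pos_sub_eq_mul {f : ℝ → ℝ} {s : Set ℝ} (hf : StrictMonoOn f s)
    {a b : ℝ} (ha : a ∈ s) (hb : b ∈ s) : ∃ d, 0 < d ∧ f a - f b = d * (a - b) := by
  by_cases hab : a = b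
  · exact ⟨1, one_pos, by simp [hab]⟩
  · refine ⟨slope f b a, hf.slope_pos hb ha (Ne.symm hab), ?_⟩
    rw [mul_comm]
    exact (sub_smul_slope f b a).symm

lemma exists_log_sub_log_eq_mul {n : ℕ} {x y : Fin n → ℝ} (hx : x ∈ posOrth n)
    (hy : y ∈ posOrth n) :
    ∃ ℓ : Fin n → ℝ, (∀ i, 0 < ℓ i) ∧
      ∀ i, Real.log (x i) - Real.log (y i) = ℓ i * (x i - y i) := by
  choose ℓ hℓ hlog using fun i =>
    Real.strictMonoOn_log.exists_pos_sub_eq_mul (Set.mem_Ioi.2 (hx i)) (Set.mem_Ioi.2 (hy i))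
  exact ⟨ℓ, hℓ, hlog⟩

lemma exists_posOrth_sub_eq {n : ℕ} (z : Fin n → ℝ) :
    ∃ x ∈ posOrth n, ∃ y ∈ posOrth n, x - y = z := by
  refine ⟨fun i => |z i| + 1 + z i, fun i => ?_, fun i => |z i| + 1, fun i => by positivity, ?_⟩
  · linarith [neg_abs_le (z i)]
  · funext i
    simp

lemma diagonal_mul_mul_diagonal_mem_QualS {n r : ℕ} {𝒲 : Matrix (Fin r) (Fin n) (Set SignType)}
    {B : Matrix (Fin r) (Fin n) ℝ} (hB : B ∈ QualS 𝒲) {p : Fin r → ℝ} {q : Fin n → ℝ}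
    (hp : ∀ j, 0 < p j) (hq : ∀ i, 0 < q i) : diagonal p * B * diagonal q ∈ QualS 𝒲 := by
  intro j i
  rw [mul_diagonal, diagonal_mul, sign_mul, sign_mul, sign_pos (hp j), sign_pos (hq i), one_mul,
    mul_one]
  exact hB j i

lemma monMap_eq_exp_mulVec_log {n r : ℕ} (B : Matrix (Fin r) (Fin n) ℝ) {x : Fin n → ℝ}
    (hx : x ∈ posOrth n) : monMap B x = fun j => Real.exp ((B *ᵥ fun i => Real.log (x i)) j) := by
  funext j
  simp only [monMap, mulVec, dotProduct, Real.exp_sum]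
  exact Finset.prod_congr rfl fun i _ => by rw [Real.rpow_def_of_pos (hx i), mul_comm]

lemma monMap_sub_monMap {n r : ℕ} (B : Matrix (Fin r) (Fin n) ℝ) {x y ℓ : Fin n → ℝ}
    (hx : x ∈ posOrth n) (hy : y ∈ posOrth n)
    (hlog : ∀ i, Real.log (x i) - Real.log (y i) = ℓ i * (x i - y i)) :
    ∃ e : Fin r → ℝ, (∀ j, 0 < e j) ∧
      monMap B x - monMap B y = (diagonal e * B * diagonal ℓ) *ᵥ (x - y) := by
  choose e he hexp using fun j =>
    (Real.exp_strictMono.strictMonoOn Set.univ).exists_pos_sub_eq_mul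
      (Set.mem_univ ((B *ᵥ fun i => Real.log (x i)) j))
      (Set.mem_univ ((B *ᵥ fun i => Real.log (y i)) j))
  have hℓ : diagonal ℓ *ᵥ (x - y) = (fun i => Real.log (x i)) - fun i => Real.log (y i) := by
    funext i
    rw [mulVec_diagonal, Pi.sub_apply, Pi.sub_apply, hlog]
  refine ⟨e, he, ?_⟩
  funext j
  rw [← mulVec_mulVec, ← mulVec_mulVec, hℓ, mulVec_diagonal, mulVec_sub, Pi.sub_apply,
    Pi.sub_apply, monMap_eq_exp_mulVec_log B hx, monMap_eq_exp_mulVec_log B hy, hexp]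

lemma mul_monMap_sub_mul_monMap {n r : ℕ} (B : Matrix (Fin r) (Fin n) ℝ) (κ : Fin r → ℝ)
    (x y : Fin n → ℝ) :
    ((fun j => κ j * monMap B x j) - fun j => κ j * monMap B y j) =
      diagonal κ *ᵥ (monMap B x - monMap B y) := by
  funext j
  simp only [Pi.sub_apply, mulVec_diagonal, mul_sub]

theorem mW_isAffine {n r : ℕ} (𝒲 : Matrix (Fin r) (Fin n) (Set SignType)) :
    ∀ G ∈ mW 𝒲, IsAffine (posOrth n) (QualS 𝒲) G := by
  rintro G ⟨B, hB, κ, hκ, rfl⟩ x hx y hy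
  obtain ⟨ℓ, hℓ, hlog⟩ := exists_log_sub_log_eq_mul hx hy
  obtain ⟨e, he, hsub⟩ := monMap_sub_monMap B hx hy hlog
  refine ⟨diagonal (fun j => κ j * e j) * B * diagonal ℓ,
    diagonal_mul_mul_diagonal_mem_QualS hB (fun j => mul_pos (hκ j) (he j)) hℓ, ?_⟩
  rw [mul_monMap_sub_mul_monMap, hsub, mulVec_mulVec, ← diagonal_mul_diagonal', Matrix.mul_assoc,
    Matrix.mul_assoc, Matrix.mul_assoc]

theorem exists_mem_mW_sub_eq_mulVec {n r : ℕ} {𝒲 : Matrix (Fin r) (Fin n) (Set SignType)}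
    {M : Matrix (Fin r) (Fin n) ℝ} (hM : M ∈ QualS 𝒲) {x y : Fin n → ℝ} (hx : x ∈ posOrth n)
    (hy : y ∈ posOrth n) : ∃ G ∈ mW 𝒲, G x - G y = M *ᵥ (x - y) := by
  obtain ⟨ℓ, hℓ, hlog⟩ := exists_log_sub_log_eq_mul hx hy
  obtain ⟨e, he, hsub⟩ := monMap_sub_monMap (M * diagonal ℓ⁻¹) hx hy hlog
  have hB : M * diagonal ℓ⁻¹ ∈ QualS 𝒲 := by
    have := diagonal_mul_mul_diagonal_mem_QualS hM (fun _ => one_pos) (inv_pos.2 <| hℓ ·)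
    rwa [diagonal_one, Matrix.one_mul] at this
  have hinv : ∀ {m : ℕ} (d : Fin m → ℝ), (∀ k, 0 < d k) → diagonal d⁻¹ * diagonal d = 1 :=
    fun d hd => by
      rw [diagonal_mul_diagonal, ← diagonal_one]
      exact congrArg diagonal (funext fun k => inv_mul_cancel₀ (hd k).ne')
  refine ⟨_, ⟨_, hB, e⁻¹, (inv_pos.2 <| he ·), rfl⟩, ?_⟩
  rw [mul_monMap_sub_mul_monMap, hsub, mulVec_mulVec, ← Matrix.mul_assoc, ← Matrix.mul_assoc, hinv e he,
    Matrix.one_mul, Matrix.mul_assoc, hinv ℓ hℓ, Matrix.mul_one]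

theorem stmt15_general {n r : ℕ} (𝒲 : Matrix (Fin r) (Fin n) (Set SignType))
    (S : Submodule ℝ (Fin n → ℝ)) :
    (∀ G ∈ mW 𝒲, IsAffine (posOrth n) (QualS 𝒲) G) ∧
    DeltaS (posOrth n) S (mW 𝒲) = matImage (QualS 𝒲) ((S : Set (Fin n → ℝ)) \ {0}) := by
  refine ⟨mW_isAffine 𝒲, Set.ext fun w => ⟨?_, ?_⟩⟩
  · rintro ⟨G, hG, x, hx, y, hy, hS, hne, rfl⟩
    obtain ⟨M, hM, hGxy⟩ := mW_isAffine 𝒲 G hG x hx y hy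
    exact ⟨M, hM, x - y, ⟨hS, hne⟩, hGxy⟩
  · rintro ⟨M, hM, z, ⟨hzS, hz0⟩, rfl⟩
    obtain ⟨x, hx, y, hy, rfl⟩ := exists_posOrth_sub_eq z
    obtain ⟨G, hG, hGxy⟩ := exists_mem_mW_sub_eq_mulVec hM hx hy
    exact ⟨G, hG, x, hx, y, hy, hzS, hz0, hGxy.symm⟩

/-- For `𝒲 ∈ 𝒮^{r×n}` (entries: non-empty sets of signs):
(a) `m(𝒲)` is `Q(𝒲)`-affine; (b) `Δ_S m(𝒲) = Q(𝒲)(S \ {0})`. -/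
theorem stmt15 {n r : ℕ} (𝒲 : Matrix (Fin r) (Fin n) (Set SignType))
    (h𝒲 : ∀ i j, (𝒲 i j).Nonempty) (S : Submodule ℝ (Fin n → ℝ)) :
    (∀ G ∈ mW 𝒲, IsAffine (posOrth n) (QualS 𝒲) G) ∧
    DeltaS (posOrth n) S (mW 𝒲) = matImage (QualS 𝒲) ((S : Set (Fin n → ℝ)) \ {0}) :=
  stmt15_general 𝒲 S
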